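/- arXiv:1105.5436 — 2 statements merged into one kernel-verified Lean document; each statement's English description precedes it below -/
import Mathlib

section
/- Let X = X_Σ be the smooth toric Fano 4-fold M_1, where Σ is the complete fan in N ≅ Z^4 whose maximal cones are the cones over the facets of the convex hull of its minimal ray generators v_1 = e_1, v_2 = e_2, v_3 = e_3, v_4 = e_4, v_5 = −e_4, v_6 = e_1 + e_2 + e_3 − e_4, v_7 = −e_1 − e_2 − e_3 + e_4, v_8 = −e_1. Then ch_2(T_X) · V(⟨v_2, v_4⟩) = −5/2; in particular X is not 2-Fano. -/
/-!
The toric Fano 4-fold `M₁` of the (Batyrev) classification of smooth toric Fano 4-folds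
satisfies `ch₂(T_X) · V(⟨v2, v4⟩) = -(5/2`; in particular `X = X_Σ` is not 2-Fano.

Since Mathlib has no toric geometry, we model the situation faithfully and concretely:
* the fan `Σ` is the complete fan in `ℤ⁴ ⊗ ℚ` whose maximal cones are the cones over the
  facets of the convex hull of the minimal ray generators (a facet corresponds to a set `s`
  of rays lying on a hyperplane `⟨u, ·⟩ = 1` with all remaining rays strictly below it);
* the rational Chow ring of the associated smooth complete toric variety is presented, as a
  commutative `ℚ`-algebra, by the classes `D i` of the invariant divisors subject to the
  Stanley–Reisner relations and the linear relations `div(χᵘ) ∼ 0`, together with the degree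
  map `deg` sending the class of a point (the product of the divisors of a maximal cone) to 1;
* `ch₂(T_X) = ½ ∑ᵢ Dᵢ²`, the class of the invariant surface `V(⟨v_i, v_j⟩)` is `D i * D j`,
  and `X` is 2-Fano iff `ch₂(T_X) · S > 0` for every irreducible surface `S ⊆ X` (so in
  particular for every invariant surface).
-/

open Finset

/-- Rational dot product on `Fin 4 → ℚ`. -/
def dotQ (u x : Fin 4 → ℚ) : ℚ := ∑ k, u k * x k

/-- `FanMaxCone v s`: the rays indexed by `s` are exactly the vertices of a facet of the
convex hull of the rays `v`, i.e. they lie on a hyperplane `⟨u, ·⟩ = 1` and all other rays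
lie strictly below it; the polytope is simplicial of dimension 4, so a facet has exactly four
vertices (without `s.card = 4` every face, the empty one too, would qualify).  The cone over
such a facet is a maximal cone of the fan `Σ`. -/
def FanMaxCone {d : ℕ} (v : Fin d → Fin 4 → ℚ) (s : Finset (Fin d)) : Prop :=
  s.card = 4 ∧ ∃ u : Fin 4 → ℚ, (∀ i ∈ s, dotQ u (v i) = 1) ∧ ∀ j ∉ s, dotQ u (v j) < 1

/-- `FanCone v s`: the rays indexed by `s` span a cone of the fan `Σ` (i.e. a face of one of
the maximal cones). -/
def FanCone {d : ℕ} (v : Fin d → Fin 4 → ℚ) (s : Finset (Fin d)) : Prop :=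
  ∃ t : Finset (Fin d), FanMaxCone v t ∧ s ⊆ t

/-- The minimal ray generators of the fan of the toric Fano 4-fold `M₁`:
`v₁ = e₁`, `v₂ = e₂`, `v₃ = e₃`, `v₄ = e₄`, `v₅ = -e₄`, `v₆ = e₁ + e₂ + e₃ - e₄`, `v₇ = -e₁ - e₂ - e₃ + e₄`, `v₈ = -e₁`
(indexed here by `0, …, 7`). -/
def M1rays : Fin 8 → Fin 4 → ℚ :=
  ![![1,0,0,0], ![0,1,0,0], ![0,0,1,0], ![0,0,0,1], ![0,0,0,-1], ![1,1,1,-1], ![-1,-1,-1,1], ![-1,0,0,0]]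

lemma cons4_0 {α : Type*} (a b c d : α) : ![a,b,c,d] (0 : Fin 4) = a := rfl
lemma cons4_1 {α : Type*} (a b c d : α) : ![a,b,c,d] (1 : Fin 4) = b := rfl
lemma cons4_2 {α : Type*} (a b c d : α) : ![a,b,c,d] (2 : Fin 4) = c := rfl
lemma cons4_3 {α : Type*} (a b c d : α) : ![a,b,c,d] (3 : Fin 4) = d := rfl
lemma cons8_0 {α : Type*} (a b c d e f g h : α) : ![a,b,c,d,e,f,g,h] (0 : Fin 8) = a := rfl
lemma cons8_1 {α : Type*} (a b c d e f g h : α) : ![a,b,c,d,e,f,g,h] (1 : Fin 8) = b := rfl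
lemma cons8_2 {α : Type*} (a b c d e f g h : α) : ![a,b,c,d,e,f,g,h] (2 : Fin 8) = c := rfl
lemma cons8_3 {α : Type*} (a b c d e f g h : α) : ![a,b,c,d,e,f,g,h] (3 : Fin 8) = d := rfl
lemma cons8_4 {α : Type*} (a b c d e f g h : α) : ![a,b,c,d,e,f,g,h] (4 : Fin 8) = e := rfl
lemma cons8_5 {α : Type*} (a b c d e f g h : α) : ![a,b,c,d,e,f,g,h] (5 : Fin 8) = f := rfl
lemma cons8_6 {α : Type*} (a b c d e f g h : α) : ![a,b,c,d,e,f,g,h] (6 : Fin 8) = g := rfl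
lemma cons8_7 {α : Type*} (a b c d e f g h : α) : ![a,b,c,d,e,f,g,h] (7 : Fin 8) = h := rfl

lemma dotQ_eval (u x : Fin 4 → ℚ) :
    dotQ u x = u 0 * x 0 + u 1 * x 1 + u 2 * x 2 + u 3 * x 3 := by
  rw [dotQ, Fin.sum_univ_four]

theorem M1_ch2_V_eq_and_not_twoFano
    (A : Type*) [CommRing A] [Algebra ℚ A]
    -- `D i` = class of the invariant prime divisor `D_i = V(⟨v_i⟩)` in the rational Chow ring `A`
    (D : Fin 8 → A)
    -- `deg` = the degree map on 0-cycle classes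
    (deg : A →ₗ[ℚ] ℚ)
    -- Stanley–Reisner relations of the fan
    (hSR : ∀ s : Finset (Fin 8), ¬ FanCone M1rays s → ∏ i ∈ s, D i = 0)
    -- linear relations: `div(χᵘ) = ∑ᵢ ⟨u, vᵢ⟩ Dᵢ ∼ 0`
    (hlin : ∀ u : Fin 4 → ℚ, ∑ i, dotQ u (M1rays i) • D i = 0)
    -- normalization: a point, i.e. `V(σ)` for a maximal cone `σ`, has degree `1`
    (hdeg : ∀ s : Finset (Fin 8), FanMaxCone M1rays s → deg (∏ i ∈ s, D i) = 1) :
    deg (((2 : ℚ)⁻¹ • ∑ i, D i ^ 2) * (D 1 * D 3)) = -(5/2) ∧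
    ¬ (∀ s : Finset (Fin 8), FanCone M1rays s → s.card = 2 →
        0 < deg (((2 : ℚ)⁻¹ • ∑ i, D i ^ 2) * ∏ i ∈ s, D i)) := by
  
  classical
  have hl0 : D 0 + D 5 - D 6 - D 7 = 0 := by
    have h := hlin ![1,0,0,0]
    rw [Fin.sum_univ_eight] at h
    simp only [dotQ_eval, M1rays, cons8_0, cons8_1, cons8_2, cons8_3, cons8_4, cons8_5, cons8_6, cons8_7, cons4_0, cons4_1, cons4_2, cons4_3] at h
    norm_num at h
    linear_combination h
  have hl1 : D 1 + D 5 - D 6 = 0 := by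
    have h := hlin ![0,1,0,0]
    rw [Fin.sum_univ_eight] at h
    simp only [dotQ_eval, M1rays, cons8_0, cons8_1, cons8_2, cons8_3, cons8_4, cons8_5, cons8_6, cons8_7, cons4_0, cons4_1, cons4_2, cons4_3] at h
    norm_num at h
    linear_combination h
  have hl2 : D 2 + D 5 - D 6 = 0 := by
    have h := hlin ![0,0,1,0]
    rw [Fin.sum_univ_eight] at h
    simp only [dotQ_eval, M1rays, cons8_0, cons8_1, cons8_2, cons8_3, cons8_4, cons8_5, cons8_6, cons8_7, cons4_0, cons4_1, cons4_2, cons4_3] at h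
    norm_num at h
    linear_combination h
  have hl3 : D 3 - D 4 - D 5 + D 6 = 0 := by
    have h := hlin ![0,0,0,1]
    rw [Fin.sum_univ_eight] at h
    simp only [dotQ_eval, M1rays, cons8_0, cons8_1, cons8_2, cons8_3, cons8_4, cons8_5, cons8_6, cons8_7, cons4_0, cons4_1, cons4_2, cons4_3] at h
    norm_num at h
    linear_combination h
  have hbd : ∀ t : Finset (Fin 8), FanMaxCone M1rays t → ∀ s : Finset (Fin 8), s ⊆ t →
      ∃ u : Fin 4 → ℚ, (∀ i ∈ s, dotQ u (M1rays i) = 1) ∧ ∀ k, dotQ u (M1rays k) ≤ 1 := by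
    rintro t ⟨-, u, h1, h2⟩ s hs
    refine ⟨u, fun i hi => h1 i (hs hi), fun k => ?_⟩
    by_cases h : k ∈ t
    · exact le_of_eq (h1 k h)
    · exact le_of_lt (h2 k h)
  have hz07 : D 0 * D 7 = 0 := by
    have h := hSR {0, 7} ?_
    · simpa using h
    rintro ⟨t, hmax, hsub⟩
    obtain ⟨u, h1, h2⟩ := hbd t hmax _ hsub
    have e0 := h1 0 (by decide)
    have e7 := h1 7 (by decide)
    simp only [dotQ_eval, M1rays, cons8_0, cons8_1, cons8_2, cons8_3, cons8_4, cons8_5, cons8_6, cons8_7, cons4_0, cons4_1, cons4_2, cons4_3] at e0 e7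
    linarith
  have hz34 : D 3 * D 4 = 0 := by
    have h := hSR {3, 4} ?_
    · simpa using h
    rintro ⟨t, hmax, hsub⟩
    obtain ⟨u, h1, h2⟩ := hbd t hmax _ hsub
    have e3 := h1 3 (by decide)
    have e4 := h1 4 (by decide)
    simp only [dotQ_eval, M1rays, cons8_0, cons8_1, cons8_2, cons8_3, cons8_4, cons8_5, cons8_6, cons8_7, cons4_0, cons4_1, cons4_2, cons4_3] at e3 e4
    linarith
  have hz56 : D 5 * D 6 = 0 := by
    have h := hSR {5, 6} ?_
    · simpa using h
    rintro ⟨t, hmax, hsub⟩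
    obtain ⟨u, h1, h2⟩ := hbd t hmax _ hsub
    have e5 := h1 5 (by decide)
    have e6 := h1 6 (by decide)
    simp only [dotQ_eval, M1rays, cons8_0, cons8_1, cons8_2, cons8_3, cons8_4, cons8_5, cons8_6, cons8_7, cons4_0, cons4_1, cons4_2, cons4_3] at e5 e6
    linarith
  have hz012 : D 0 * D 1 * D 2 = 0 := by
    have h := hSR {0, 1, 2} ?_
    · have e : ∏ i ∈ ({0, 1, 2} : Finset (Fin 8)), D i = D 0 * D 1 * D 2 := by
        rw [Finset.prod_insert (by decide), Finset.prod_insert (by decide),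
          Finset.prod_singleton]
        ring
      rwa [e] at h
    rintro ⟨t, hmax, hsub⟩
    obtain ⟨u, h1, h2⟩ := hbd t hmax _ hsub
    have e0 := h1 0 (by decide)
    have e1 := h1 1 (by decide)
    have e2 := h1 2 (by decide)
    have b3 := h2 3
    have b5 := h2 5
    simp only [dotQ_eval, M1rays, cons8_0, cons8_1, cons8_2, cons8_3, cons8_4, cons8_5, cons8_6, cons8_7, cons4_0, cons4_1, cons4_2, cons4_3] at e0 e1 e2 b3 b5
    linarith
  have hz126 : D 1 * D 2 * D 6 = 0 := by
    have h := hSR {1, 2, 6} ?_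
    · have e : ∏ i ∈ ({1, 2, 6} : Finset (Fin 8)), D i = D 1 * D 2 * D 6 := by
        rw [Finset.prod_insert (by decide), Finset.prod_insert (by decide),
          Finset.prod_singleton]
        ring
      rwa [e] at h
    rintro ⟨t, hmax, hsub⟩
    obtain ⟨u, h1, h2⟩ := hbd t hmax _ hsub
    have e1 := h1 1 (by decide)
    have e2 := h1 2 (by decide)
    have e6 := h1 6 (by decide)
    have b3 := h2 3
    have b7 := h2 7
    simp only [dotQ_eval, M1rays, cons8_0, cons8_1, cons8_2, cons8_3, cons8_4, cons8_5, cons8_6, cons8_7, cons4_0, cons4_1, cons4_2, cons4_3] at e1 e2 e6 b3 b7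
    linarith
  have hz357 : D 3 * D 5 * D 7 = 0 := by
    have h := hSR {3, 5, 7} ?_
    · have e : ∏ i ∈ ({3, 5, 7} : Finset (Fin 8)), D i = D 3 * D 5 * D 7 := by
        rw [Finset.prod_insert (by decide), Finset.prod_insert (by decide),
          Finset.prod_singleton]
        ring
      rwa [e] at h
    rintro ⟨t, hmax, hsub⟩
    obtain ⟨u, h1, h2⟩ := hbd t hmax _ hsub
    have e3 := h1 3 (by decide)
    have e5 := h1 5 (by decide)
    have e7 := h1 7 (by decide)
    have b1 := h2 1
    have b2 := h2 2
    simp only [dotQ_eval, M1rays, cons8_0, cons8_1, cons8_2, cons8_3, cons8_4, cons8_5, cons8_6, cons8_7, cons4_0, cons4_1, cons4_2, cons4_3] at e3 e5 e7 b1 b2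
    linarith
  have hmc : ∀ (t : Finset (Fin 8)), t.card = 4 → ∀ (u : Fin 4 → ℚ),
      (∀ i ∈ t, dotQ u (M1rays i) = 1) → (∀ j ∉ t, dotQ u (M1rays j) < 1) →
      FanMaxCone M1rays t := fun t hc u h1 h2 => ⟨hc, u, h1, h2⟩
  have hP1 : deg (D 1 * D 2 * D 3 * D 7) = 1 := by
    have h := hdeg {1, 2, 3, 7} (hmc _ (by decide) ![-1,1,1,1] (by
        intro i hi
        fin_cases hi <;> (simp only [dotQ_eval, M1rays, cons8_0, cons8_1, cons8_2, cons8_3, cons8_4, cons8_5, cons8_6, cons8_7, cons4_0, cons4_1, cons4_2, cons4_3]; norm_num))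
      (by
        intro j hj
        fin_cases j <;>
          first
            | exact absurd (by decide) hj
            | (simp only [dotQ_eval, M1rays, cons8_0, cons8_1, cons8_2, cons8_3, cons8_4, cons8_5, cons8_6, cons8_7, cons4_0, cons4_1, cons4_2, cons4_3]; simp)))
    have e : ∏ i ∈ ({1, 2, 3, 7} : Finset (Fin 8)), D i = D 1 * D 2 * D 3 * D 7 := by
      rw [Finset.prod_insert (by decide), Finset.prod_insert (by decide),
        Finset.prod_insert (by decide), Finset.prod_singleton]
      ring
    rwa [e] at h
  have hP2 : deg (D 1 * D 2 * D 3 * D 5) = 1 := by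
    have h := hdeg {1, 2, 3, 5} (hmc _ (by decide) ![0,1,1,1] (by
        intro i hi
        fin_cases hi <;> (simp only [dotQ_eval, M1rays, cons8_0, cons8_1, cons8_2, cons8_3, cons8_4, cons8_5, cons8_6, cons8_7, cons4_0, cons4_1, cons4_2, cons4_3]; norm_num))
      (by
        intro j hj
        fin_cases j <;>
          first
            | exact absurd (by decide) hj
            | (simp only [dotQ_eval, M1rays, cons8_0, cons8_1, cons8_2, cons8_3, cons8_4, cons8_5, cons8_6, cons8_7, cons4_0, cons4_1, cons4_2, cons4_3]; simp)))
    have e : ∏ i ∈ ({1, 2, 3, 5} : Finset (Fin 8)), D i = D 1 * D 2 * D 3 * D 5 := by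
      rw [Finset.prod_insert (by decide), Finset.prod_insert (by decide),
        Finset.prod_insert (by decide), Finset.prod_singleton]
      ring
    rwa [e] at h
  have hP3 : deg (D 1 * D 3 * D 6 * D 7) = 1 := by
    have h := hdeg {1, 3, 6, 7} (hmc _ (by decide) ![-1,1,0,1] (by
        intro i hi
        fin_cases hi <;> (simp only [dotQ_eval, M1rays, cons8_0, cons8_1, cons8_2, cons8_3, cons8_4, cons8_5, cons8_6, cons8_7, cons4_0, cons4_1, cons4_2, cons4_3]; norm_num))
      (by
        intro j hj
        fin_cases j <;>
          first
            | exact absurd (by decide) hj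
            | (simp only [dotQ_eval, M1rays, cons8_0, cons8_1, cons8_2, cons8_3, cons8_4, cons8_5, cons8_6, cons8_7, cons4_0, cons4_1, cons4_2, cons4_3]; simp)))
    have e : ∏ i ∈ ({1, 3, 6, 7} : Finset (Fin 8)), D i = D 1 * D 3 * D 6 * D 7 := by
      rw [Finset.prod_insert (by decide), Finset.prod_insert (by decide),
        Finset.prod_insert (by decide), Finset.prod_singleton]
      ring
    rwa [e] at h
  have key : (∑ i, D i ^ 2) * (D 1 * D 3) +
      (D 1 * D 2 * D 3 * D 7 + D 1 * D 2 * D 3 * D 7 + D 1 * D 2 * D 3 * D 7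
        + D 1 * D 2 * D 3 * D 5 + D 1 * D 3 * D 6 * D 7) = 0 := by
    rw [Fin.sum_univ_eight]
    linear_combination
      (D 0 * D 1 * D 3 - 3 * (D 1 * D 2 * D 3) - D 1 * D 3 * D 7) * hl0
      + (D 1 ^ 2 * D 3 + D 1 * D 2 * D 3) * hl1
      + (- (D 0 * D 1 * D 3) - D 1 ^ 2 * D 3 + D 1 * D 2 * D 3 + D 1 * D 3 ^ 2
          + D 1 * D 3 * D 5 - D 1 * D 3 * D 6) * hl2
      + (D 1 * D 3 ^ 2 - D 1 * D 2 * D 3) * hl3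
      + (2 * (D 1 * D 3)) * hz07
      + (D 1 * D 4 + D 1 * D 3 - D 1 * D 2) * hz34
      + (2 * (D 1 * D 3)) * hz56
      + (4 * D 3) * hz012
      + D 3 * hz126
      + D 1 * hz357
  have hdeg5 : deg ((∑ i, D i ^ 2) * (D 1 * D 3)) = -5 := by
    have h := congrArg deg key
    simp only [map_add, map_zero] at h
    rw [hP1, hP2, hP3] at h
    linarith
  have main : deg (((2 : ℚ)⁻¹ • ∑ i, D i ^ 2) * (D 1 * D 3)) = -(5/2) := by
    rw [smul_mul_assoc, map_smul, hdeg5, smul_eq_mul]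
    norm_num
  refine ⟨main, fun h => ?_⟩
  have hc : FanCone M1rays {1, 3} :=
    ⟨{0, 1, 3, 5}, hmc _ (by decide) ![1,1,0,1] (by
      intro i hi
      fin_cases hi <;> (simp only [dotQ_eval, M1rays, cons8_0, cons8_1, cons8_2, cons8_3, cons8_4, cons8_5, cons8_6, cons8_7, cons4_0, cons4_1, cons4_2, cons4_3]; norm_num))
    (by
      intro j hj
      fin_cases j <;>
        first
          | exact absurd (by decide) hj
          | (simp only [dotQ_eval, M1rays, cons8_0, cons8_1, cons8_2, cons8_3, cons8_4, cons8_5, cons8_6, cons8_7, cons4_0, cons4_1, cons4_2, cons4_3]; simp)), by decide⟩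
  have h2 := h {1, 3} hc (by decide)
  have hp : ∏ i ∈ ({1, 3} : Finset (Fin 8)), D i = D 1 * D 3 := by
    rw [Finset.prod_insert (by decide), Finset.prod_singleton]
  rw [hp, main] at h2
  norm_num at h2
end

section
/- Let X = X_Σ be the smooth toric Fano 4-fold numbered 124 in Batyrev's classification, where Σ is the complete fan in N ≅ Z^4 whose maximal cones are the cones over the facets of the convex hull of its minimal ray generators v_1 = e_1, v_2 = e_2, v_3 = −e_1 − e_2, v_4 = −e_1 + e_4, v_5 = e_1 − e_3 − e_4, v_6 = e_3, v_7 = e_4, v_8 = e_1 + e_2 − e_3 − e_4, v_9 = −e_1 − e_2 + e_3. Then ch_2(T_X) · V(⟨v_1, v_7⟩) = −4; in particular X is not 2-Fano. -/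
/-!
The toric Fano 4-fold `number 124 (in Batyrev's classification)` of the (Batyrev) classification of smooth toric Fano 4-folds
satisfies `ch₂(T_X) · V(⟨v1, v7⟩) = -4`; in particular `X = X_Σ` is not 2-Fano.

Since Mathlib has no toric geometry, we model the situation faithfully and concretely:
* the fan `Σ` is the complete fan in `ℤ⁴ ⊗ ℚ` whose maximal cones are the cones over the
  facets of the convex hull of the minimal ray generators (a facet corresponds to a set `s`
  of rays lying on a hyperplane `⟨u, ·⟩ = 1` with all remaining rays strictly below it);
* the rational Chow ring of the associated smooth complete toric variety is presented, as a
  commutative `ℚ`-algebra, by the classes `D i` of the invariant divisors subject to the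
  Stanley–Reisner relations and the linear relations `div(χᵘ) ∼ 0`, together with the degree
  map `deg` sending the class of a point (the product of the divisors of a maximal cone) to 1;
* `ch₂(T_X) = ½ ∑ᵢ Dᵢ²`, the class of the invariant surface `V(⟨v_i, v_j⟩)` is `D i * D j`,
  and `X` is 2-Fano iff `ch₂(T_X) · S > 0` for every irreducible surface `S ⊆ X` (so in
  particular for every invariant surface).
-/

open Finset

/-- The minimal ray generators of the fan of the toric Fano 4-fold `number 124 (in Batyrev's classification)`:
`v₁ = e₁`, `v₂ = e₂`, `v₃ = -e₁ - e₂`, `v₄ = -e₁ + e₄`, `v₅ = e₁ - e₃ - e₄`, `v₆ = e₃`, `v₇ = e₄`, `v₈ = e₁ + e₂ - e₃ - e₄`, `v₉ = -e₁ - e₂ + e₃`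
(indexed here by `0, …, 8`). -/
def X124rays : Fin 9 → Fin 4 → ℚ :=
  ![![1,0,0,0], ![0,1,0,0], ![-1,-1,0,0], ![-1,0,0,1], ![1,0,-1,-1], ![0,0,1,0], ![0,0,0,1], ![1,1,-1,-1], ![-1,-1,1,0]]

lemma r0 : X124rays 0 = ![1,0,0,0] := rfl
lemma r1 : X124rays 1 = ![0,1,0,0] := rfl
lemma r2 : X124rays 2 = ![-1,-1,0,0] := rfl
lemma r3 : X124rays 3 = ![-1,0,0,1] := rfl
lemma r4 : X124rays 4 = ![1,0,-1,-1] := rfl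
lemma r5 : X124rays 5 = ![0,0,1,0] := rfl
lemma r6 : X124rays 6 = ![0,0,0,1] := rfl
lemma r7 : X124rays 7 = ![1,1,-1,-1] := rfl
lemma r8 : X124rays 8 = ![-1,-1,1,0] := rfl

lemma sum_univ_nine {M : Type*} [AddCommMonoid M] (f : Fin 9 → M) :
    ∑ i, f i = f 0 + f 1 + f 2 + f 3 + f 4 + f 5 + f 6 + f 7 + f 8 := by
  rw [Fin.sum_univ_castSucc, Fin.sum_univ_eight]
  rfl

-- facet certificates
lemma fan0246 : FanMaxCone X124rays {0,2,4,6} := by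
  refine ⟨by decide, ![1,-2,-1,1], ?_, ?_⟩
  · intro i hi; fin_cases hi <;> norm_num [dotQ, Fin.sum_univ_four, r0,r1,r2,r3,r4,r5,r6,r7,r8, Matrix.cons_val_two, Matrix.cons_val_three, Matrix.vecHead, Matrix.vecTail]
  · intro j hj; fin_cases j <;>
      simp_all [dotQ, Fin.sum_univ_four, r0,r1,r2,r3,r4,r5,r6,r7,r8] <;> norm_num

lemma fan0167 : FanMaxCone X124rays {0,1,6,7} := by
  refine ⟨by decide, ![1,1,0,1], ?_, ?_⟩
  · intro i hi; fin_cases hi <;> norm_num [dotQ, Fin.sum_univ_four, r0,r1,r2,r3,r4,r5,r6,r7,r8, Matrix.cons_val_two, Matrix.cons_val_three, Matrix.vecHead, Matrix.vecTail]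
  · intro j hj; fin_cases j <;>
      simp_all [dotQ, Fin.sum_univ_four, r0,r1,r2,r3,r4,r5,r6,r7,r8] <;> norm_num

lemma fan0467 : FanMaxCone X124rays {0,4,6,7} := by
  refine ⟨by decide, ![1,0,-1,1], ?_, ?_⟩
  · intro i hi; fin_cases hi <;> norm_num [dotQ, Fin.sum_univ_four, r0,r1,r2,r3,r4,r5,r6,r7,r8, Matrix.cons_val_two, Matrix.cons_val_three, Matrix.vecHead, Matrix.vecTail]
  · intro j hj; fin_cases j <;>
      simp_all [dotQ, Fin.sum_univ_four, r0,r1,r2,r3,r4,r5,r6,r7,r8] <;> norm_num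

lemma fan0268 : FanMaxCone X124rays {0,2,6,8} := by
  refine ⟨by decide, ![1,-2,0,1], ?_, ?_⟩
  · intro i hi; fin_cases hi <;> norm_num [dotQ, Fin.sum_univ_four, r0,r1,r2,r3,r4,r5,r6,r7,r8, Matrix.cons_val_two, Matrix.cons_val_three, Matrix.vecHead, Matrix.vecTail]
  · intro j hj; fin_cases j <;>
      simp_all [dotQ, Fin.sum_univ_four, r0,r1,r2,r3,r4,r5,r6,r7,r8] <;> norm_num

lemma fan0568 : FanMaxCone X124rays {0,5,6,8} := by
  refine ⟨by decide, ![1,-1,1,1], ?_, ?_⟩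
  · intro i hi; fin_cases hi <;> norm_num [dotQ, Fin.sum_univ_four, r0,r1,r2,r3,r4,r5,r6,r7,r8, Matrix.cons_val_two, Matrix.cons_val_three, Matrix.vecHead, Matrix.vecTail]
  · intro j hj; fin_cases j <;>
      simp_all [dotQ, Fin.sum_univ_four, r0,r1,r2,r3,r4,r5,r6,r7,r8] <;> norm_num

-- non-cone certificates
lemma nc03 : ¬ FanCone X124rays ({0,3} : Finset (Fin 9)) := by
  rintro ⟨t, ⟨-, u, h1, h2⟩, hsub⟩
  have e0 := h1 0 (hsub (by decide)); have e3 := h1 3 (hsub (by decide))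
  simp [dotQ, Fin.sum_univ_four, r0, r3] at e0 e3
  by_cases h6 : (6 : Fin 9) ∈ t
  · have := h1 6 h6; simp [dotQ, Fin.sum_univ_four, r6] at this; linarith
  · have := h2 6 h6; simp [dotQ, Fin.sum_univ_four, r6] at this; linarith

lemma nc0126 : ¬ FanCone X124rays ({0,1,2,6} : Finset (Fin 9)) := by
  rintro ⟨t, ⟨-, u, h1, h2⟩, hsub⟩
  have e0 := h1 0 (hsub (by decide)); have e1 := h1 1 (hsub (by decide))
  have e2 := h1 2 (hsub (by decide))
  simp [dotQ, Fin.sum_univ_four, r0, r1, r2] at e0 e1 e2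
  linarith

lemma nc0456 : ¬ FanCone X124rays ({0,4,5,6} : Finset (Fin 9)) := by
  rintro ⟨t, ⟨-, u, h1, h2⟩, hsub⟩
  have e0 := h1 0 (hsub (by decide)); have e4 := h1 4 (hsub (by decide))
  have e5 := h1 5 (hsub (by decide)); have e6 := h1 6 (hsub (by decide))
  simp [dotQ, Fin.sum_univ_four, r0, r4, r5, r6] at e0 e4 e5 e6
  linarith

lemma nc0678 : ¬ FanCone X124rays ({0,6,7,8} : Finset (Fin 9)) := by
  rintro ⟨t, ⟨-, u, h1, h2⟩, hsub⟩
  have e6 := h1 6 (hsub (by decide)); have e7 := h1 7 (hsub (by decide))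
  have e8 := h1 8 (hsub (by decide))
  simp [dotQ, Fin.sum_univ_four, r6, r7, r8] at e6 e7 e8
  linarith

lemma nc0168 : ¬ FanCone X124rays ({0,1,6,8} : Finset (Fin 9)) := by
  rintro ⟨t, ⟨-, u, h1, h2⟩, hsub⟩
  have e0 := h1 0 (hsub (by decide)); have e1 := h1 1 (hsub (by decide))
  have e6 := h1 6 (hsub (by decide)); have e8 := h1 8 (hsub (by decide))
  simp [dotQ, Fin.sum_univ_four, r0, r1, r6, r8] at e0 e1 e6 e8
  by_cases h5 : (5 : Fin 9) ∈ t
  · have := h1 5 h5; simp [dotQ, Fin.sum_univ_four, r5] at this; linarith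
  · have := h2 5 h5; simp [dotQ, Fin.sum_univ_four, r5] at this; linarith

lemma nc0468 : ¬ FanCone X124rays ({0,4,6,8} : Finset (Fin 9)) := by
  rintro ⟨t, ⟨-, u, h1, h2⟩, hsub⟩
  have e0 := h1 0 (hsub (by decide)); have e4 := h1 4 (hsub (by decide))
  have e6 := h1 6 (hsub (by decide)); have e8 := h1 8 (hsub (by decide))
  simp [dotQ, Fin.sum_univ_four, r0, r4, r6, r8] at e0 e4 e6 e8
  by_cases h2' : (2 : Fin 9) ∈ t
  · have := h1 2 h2'; simp [dotQ, Fin.sum_univ_four, r2] at this; linarith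
  · have := h2 2 h2'; simp [dotQ, Fin.sum_univ_four, r2] at this; linarith

lemma nc0267 : ¬ FanCone X124rays ({0,2,6,7} : Finset (Fin 9)) := by
  rintro ⟨t, ⟨-, u, h1, h2⟩, hsub⟩
  have e0 := h1 0 (hsub (by decide)); have e2 := h1 2 (hsub (by decide))
  have e6 := h1 6 (hsub (by decide)); have e7 := h1 7 (hsub (by decide))
  simp [dotQ, Fin.sum_univ_four, r0, r2, r6, r7] at e0 e2 e6 e7
  by_cases h4 : (4 : Fin 9) ∈ t
  · have := h1 4 h4; simp [dotQ, Fin.sum_univ_four, r4] at this; linarith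
  · have := h2 4 h4; simp [dotQ, Fin.sum_univ_four, r4] at this; linarith

lemma nc0567 : ¬ FanCone X124rays ({0,5,6,7} : Finset (Fin 9)) := by
  rintro ⟨t, ⟨-, u, h1, h2⟩, hsub⟩
  have e0 := h1 0 (hsub (by decide)); have e5 := h1 5 (hsub (by decide))
  have e6 := h1 6 (hsub (by decide)); have e7 := h1 7 (hsub (by decide))
  simp [dotQ, Fin.sum_univ_four, r0, r5, r6, r7] at e0 e5 e6 e7
  by_cases h1' : (1 : Fin 9) ∈ t
  · have := h1 1 h1'; simp [dotQ, Fin.sum_univ_four, r1] at this; linarith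
  · have := h2 1 h1'; simp [dotQ, Fin.sum_univ_four, r1] at this; linarith

theorem X124_ch2_V_eq_and_not_twoFano
    (A : Type*) [CommRing A] [Algebra ℚ A]
    -- `D i` = class of the invariant prime divisor `D_i = V(⟨v_i⟩)` in the rational Chow ring `A`
    (D : Fin 9 → A)
    -- `deg` = the degree map on 0-cycle classes
    (deg : A →ₗ[ℚ] ℚ)
    -- Stanley–Reisner relations of the fan
    (hSR : ∀ s : Finset (Fin 9), ¬ FanCone X124rays s → ∏ i ∈ s, D i = 0)
    -- linear relations: `div(χᵘ) = ∑ᵢ ⟨u, vᵢ⟩ Dᵢ ∼ 0`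
    (hlin : ∀ u : Fin 4 → ℚ, ∑ i, dotQ u (X124rays i) • D i = 0)
    -- normalization: a point, i.e. `V(σ)` for a maximal cone `σ`, has degree `1`
    (hdeg : ∀ s : Finset (Fin 9), FanMaxCone X124rays s → deg (∏ i ∈ s, D i) = 1) :
    deg (((2 : ℚ)⁻¹ • ∑ i, D i ^ 2) * (D 0 * D 6)) = -4 ∧
    ¬ (∀ s : Finset (Fin 9), FanCone X124rays s → s.card = 2 →
        0 < deg (((2 : ℚ)⁻¹ • ∑ i, D i ^ 2) * ∏ i ∈ s, D i)) := by
  -- linear relations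
  have l1000 : D 0 - D 2 - D 3 + D 4 + D 7 - D 8 = 0 := by
    have h := hlin ![1,0,0,0]
    rw [sum_univ_nine] at h
    simp [dotQ, Fin.sum_univ_four, r0,r1,r2,r3,r4,r5,r6,r7,r8] at h
    linear_combination h
  have l1m100 : D 0 - D 1 - D 3 + D 4 = 0 := by
    have h := hlin ![1,-1,0,0]
    rw [sum_univ_nine] at h
    simp [dotQ, Fin.sum_univ_four, r0,r1,r2,r3,r4,r5,r6,r7,r8] at h
    linear_combination h
  have l1010 : D 0 - D 2 - D 3 + D 5 = 0 := by
    have h := hlin ![1,0,1,0]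
    rw [sum_univ_nine] at h
    simp [dotQ, Fin.sum_univ_four, r0,r1,r2,r3,r4,r5,r6,r7,r8] at h
    linear_combination h
  have l0100 : D 1 - D 2 + D 7 - D 8 = 0 := by
    have h := hlin ![0,1,0,0]
    rw [sum_univ_nine] at h
    simp [dotQ, Fin.sum_univ_four, r0,r1,r2,r3,r4,r5,r6,r7,r8] at h
    linear_combination h
  have l0010 : - D 4 + D 5 - D 7 + D 8 = 0 := by
    have h := hlin ![0,0,1,0]
    rw [sum_univ_nine] at h
    simp [dotQ, Fin.sum_univ_four, r0,r1,r2,r3,r4,r5,r6,r7,r8] at h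
    linear_combination h
  have l0001 : D 3 - D 4 + D 6 - D 7 = 0 := by
    have h := hlin ![0,0,0,1]
    rw [sum_univ_nine] at h
    simp [dotQ, Fin.sum_univ_four, r0,r1,r2,r3,r4,r5,r6,r7,r8] at h
    linear_combination h
  have l00m11 : D 3 - D 5 + D 6 - D 8 = 0 := by
    have h := hlin ![0,0,-1,1]
    rw [sum_univ_nine] at h
    simp [dotQ, Fin.sum_univ_four, r0,r1,r2,r3,r4,r5,r6,r7,r8] at h
    linear_combination h
  have l0101 : D 1 - D 2 + D 3 - D 4 + D 6 - D 8 = 0 := by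
    have h := hlin ![0,1,0,1]
    rw [sum_univ_nine] at h
    simp [dotQ, Fin.sum_univ_four, r0,r1,r2,r3,r4,r5,r6,r7,r8] at h
    linear_combination h
  -- Stanley–Reisner zeros
  have z03 : D 0 * D 3 = 0 := by
    have h := hSR _ nc03
    rwa [Finset.prod_pair (by decide : (0:Fin 9) ≠ 3)] at h
  have z0126 : D 0 * (D 1 * (D 2 * D 6)) = 0 := by
    have h := hSR _ nc0126
    rwa [Finset.prod_insert (by decide), Finset.prod_insert (by decide),
      Finset.prod_pair (by decide : (2:Fin 9) ≠ 6)] at h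
  have z0456 : D 0 * (D 4 * (D 5 * D 6)) = 0 := by
    have h := hSR _ nc0456
    rwa [Finset.prod_insert (by decide), Finset.prod_insert (by decide),
      Finset.prod_pair (by decide : (5:Fin 9) ≠ 6)] at h
  have z0678 : D 0 * (D 6 * (D 7 * D 8)) = 0 := by
    have h := hSR _ nc0678
    rwa [Finset.prod_insert (by decide), Finset.prod_insert (by decide),
      Finset.prod_pair (by decide : (7:Fin 9) ≠ 8)] at h
  have z0168 : D 0 * (D 1 * (D 6 * D 8)) = 0 := by
    have h := hSR _ nc0168
    rwa [Finset.prod_insert (by decide), Finset.prod_insert (by decide),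
      Finset.prod_pair (by decide : (6:Fin 9) ≠ 8)] at h
  have z0468 : D 0 * (D 4 * (D 6 * D 8)) = 0 := by
    have h := hSR _ nc0468
    rwa [Finset.prod_insert (by decide), Finset.prod_insert (by decide),
      Finset.prod_pair (by decide : (6:Fin 9) ≠ 8)] at h
  have z0267 : D 0 * (D 2 * (D 6 * D 7)) = 0 := by
    have h := hSR _ nc0267
    rwa [Finset.prod_insert (by decide), Finset.prod_insert (by decide),
      Finset.prod_pair (by decide : (6:Fin 9) ≠ 7)] at h
  have z0567 : D 0 * (D 5 * (D 6 * D 7)) = 0 := by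
    have h := hSR _ nc0567
    rwa [Finset.prod_insert (by decide), Finset.prod_insert (by decide),
      Finset.prod_pair (by decide : (6:Fin 9) ≠ 7)] at h
  -- degrees of facet classes
  have f0246 : deg (D 0 * (D 2 * (D 4 * D 6))) = 1 := by
    have h := hdeg _ fan0246
    rwa [Finset.prod_insert (by decide), Finset.prod_insert (by decide),
      Finset.prod_pair (by decide : (4:Fin 9) ≠ 6)] at h
  have f0167 : deg (D 0 * (D 1 * (D 6 * D 7))) = 1 := by
    have h := hdeg _ fan0167
    rwa [Finset.prod_insert (by decide), Finset.prod_insert (by decide),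
      Finset.prod_pair (by decide : (6:Fin 9) ≠ 7)] at h
  have f0467 : deg (D 0 * (D 4 * (D 6 * D 7))) = 1 := by
    have h := hdeg _ fan0467
    rwa [Finset.prod_insert (by decide), Finset.prod_insert (by decide),
      Finset.prod_pair (by decide : (6:Fin 9) ≠ 7)] at h
  have f0268 : deg (D 0 * (D 2 * (D 6 * D 8))) = 1 := by
    have h := hdeg _ fan0268
    rwa [Finset.prod_insert (by decide), Finset.prod_insert (by decide),
      Finset.prod_pair (by decide : (6:Fin 9) ≠ 8)] at h
  have f0568 : deg (D 0 * (D 5 * (D 6 * D 8))) = 1 := by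
    have h := hdeg _ fan0568
    rwa [Finset.prod_insert (by decide), Finset.prod_insert (by decide),
      Finset.prod_pair (by decide : (6:Fin 9) ≠ 8)] at h
  -- the key Chow-ring identity
  have hsum : (∑ i, D i ^ 2) = D 0^2 + D 1^2 + D 2^2 + D 3^2 + D 4^2 + D 5^2
      + D 6^2 + D 7^2 + D 8^2 := sum_univ_nine _
  have key : (∑ i, D i ^ 2) * (D 0 * D 6) =
      D 0 * (D 4 * (D 6 * D 7))
        - (D 0 * (D 2 * (D 4 * D 6)) + D 0 * (D 2 * (D 4 * D 6)))
        - (D 0 * (D 1 * (D 6 * D 7)) + D 0 * (D 1 * (D 6 * D 7))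
            + D 0 * (D 1 * (D 6 * D 7)) + D 0 * (D 1 * (D 6 * D 7)))
        - (D 0 * (D 2 * (D 6 * D 8)) + D 0 * (D 2 * (D 6 * D 8)))
        - D 0 * (D 5 * (D 6 * D 8)) := by
    rw [hsum]
    linear_combination
      (D 0 * D 0 * D 6) * l1000
      + (D 0 * D 2 * D 6 - D 0 * D 6 * D 7 + D 0 * D 6 * D 8) * l1m100
      + (-(D 0 * D 4 * D 6)) * l1010
      + (D 0 * D 1 * D 6 + D 0 * D 6 * D 7 - D 0 * D 2 * D 6 - D 0 * D 6 * D 8) * l0100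
      + (D 0 * D 5 * D 6 - D 0 * D 4 * D 6) * l0010
      + (D 0 * D 6 * D 6) * l0001
      + (D 0 * D 4 * D 6) * l00m11
      + (D 0 * D 6 * D 7) * l0101
      + (D 0 * D 6 + D 2 * D 6 + D 3 * D 6 - 2 * (D 4 * D 6) - D 6 * D 6
          - 2 * (D 6 * D 7) + D 6 * D 8) * z03
      + 3 * z0126 + 4 * z0456 + 3 * z0168 + z0468 + 3 * z0267 + z0567 + 3 * z0678
  have hE : deg ((∑ i, D i ^ 2) * (D 0 * D 6)) = -8 := by
    rw [key]
    simp only [map_sub, map_add]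
    rw [f0246, f0167, f0467, f0268, f0568]
    norm_num
  have g1 : deg (((2 : ℚ)⁻¹ • ∑ i, D i ^ 2) * (D 0 * D 6)) = -4 := by
    rw [smul_mul_assoc, map_smul, hE]
    norm_num
  refine ⟨g1, ?_⟩
  intro H
  have hc : FanCone X124rays ({0,6} : Finset (Fin 9)) :=
    ⟨{0,1,6,7}, fan0167, by decide⟩
  have := H {0,6} hc (by decide)
  rw [Finset.prod_pair (by decide : (0:Fin 9) ≠ 6), g1] at this
  norm_num at this
end
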